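/- If F is analytic on the open unit disk and U = Re F with sup_{0<r<1} M₂(U, r) < ∞, then sup_{0<r<1} M₂(F, r)² ≤ 2 sup_{0<r<1} M₂(U, r)² + |Re(F(0)²)|, so F belongs to the Hardy space H². -/

import Mathlib

/-!
Pointwise `‖z‖² = 2 (Re z)² - Re (z²)`, and by the mean value property the circle mean of the
holomorphic function `F²` is `F(0)²`. Hence `M₂(F, r)² = 2 M₂(Re F, r)² - Re (F(0)²)` for every
`r < 1`, and both claims follow by taking suprema.
-/

open Complex Metric Set Filter

/-- A real-valued function is harmonic on an open set `s ⊆ ℂ` if it is locally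
the real part of a holomorphic function. -/
def HarmonicOn (u : ℂ → ℝ) (s : Set ℂ) : Prop :=
  ∀ z ∈ s, ∃ ε > 0, ball z ε ⊆ s ∧ ∃ F : ℂ → ℂ,
    DifferentiableOn ℂ F (ball z ε) ∧ ∀ w ∈ ball z ε, (F w).re = u w

/-- A complex-valued function is harmonic if its real and imaginary parts are. -/
def HarmonicOnC (u : ℂ → ℂ) (s : Set ℂ) : Prop :=
  HarmonicOn (fun z => (u z).re) s ∧ HarmonicOn (fun z => (u z).im) s

/-- `H` is a harmonic majorant of `g` on `s`. -/
def HarmonicMajorantOn (g H : ℂ → ℝ) (s : Set ℂ) : Prop :=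
  HarmonicOn H s ∧ ∀ z ∈ s, g z ≤ H z

/-- `H` is the least harmonic majorant of `g` on `s`. -/
def IsLeastHarmonicMajorantOn (g H : ℂ → ℝ) (s : Set ℂ) : Prop :=
  HarmonicMajorantOn g H s ∧ ∀ H', HarmonicMajorantOn g H' s → ∀ z ∈ s, H z ≤ H' z

/-- The squared integral mean of order 2 of a complex-valued function on the circle of radius `r`. -/
noncomputable def M2sq (g : ℂ → ℂ) (r : ℝ) : ℝ :=
  (1 / (2 * Real.pi)) * ∫ θ in (0:ℝ)..(2 * Real.pi),
    ‖g ((r : ℂ) * Complex.exp (θ * Complex.I))‖ ^ 2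

theorem sq_norm_eq_two_mul_re_sq_sub_re_sq (z : ℂ) : ‖z‖ ^ 2 = 2 * z.re ^ 2 - (z ^ 2).re := by
  rw [Complex.sq_norm, Complex.normSq_apply, sq, sq, Complex.mul_re]
  ring

section CircleAverage

open Real

variable {f : ℂ → ℂ} {c : ℂ} {R : ℝ}

theorem DiffContOnCl.circleAverage_re (hf : DiffContOnCl ℂ f (ball c |R|)) :
    Real.circleAverage (fun z => (f z).re) c R = (f c).re := by
  rw [← hf.circleAverage]
  exact Complex.reCLM.circleAverage_comp_comm
    (hf.continuousOn_ball.mono sphere_subset_closedBall).circleIntegrable'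

theorem DiffContOnCl.circleAverage_sq_norm (hf : DiffContOnCl ℂ f (ball c |R|)) :
    Real.circleAverage (fun z => ‖f z‖ ^ 2) c R =
      2 * Real.circleAverage (fun z => (f z).re ^ 2) c R - (f c ^ 2).re := by
  have hf2 : DiffContOnCl ℂ (fun z => f z ^ 2) (ball c |R|) :=
    (differentiable_pow 2 : Differentiable ℂ fun w : ℂ => w ^ 2).comp_diffContOnCl hf
  have hcont : ContinuousOn f (sphere c |R|) := hf.continuousOn_ball.mono sphere_subset_closedBall
  have hre : CircleIntegrable (fun z => 2 * (f z).re ^ 2) c R :=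
    ContinuousOn.circleIntegrable' (by fun_prop)
  have hsq : CircleIntegrable (fun z => (f z ^ 2).re) c R :=
    ContinuousOn.circleIntegrable' (by fun_prop)
  simp_rw [sq_norm_eq_two_mul_re_sq_sub_re_sq]
  rw [circleAverage_fun_sub hre hsq, ← smul_eq_mul, ← circleAverage_fun_smul,
    hf2.circleAverage_re]
  rfl

end CircleAverage

theorem M2sq_eq_circleAverage (g : ℂ → ℂ) (r : ℝ) :
    M2sq g r = Real.circleAverage (fun z => ‖g z‖ ^ 2) 0 r := by
  simp [M2sq, Real.circleAverage, circleMap_zero]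

theorem M2sq_eq_two_mul_M2sq_re_sub {F : ℂ → ℂ} (hF : DifferentiableOn ℂ F (ball 0 1)) {r : ℝ}
    (hr : |r| < 1) : M2sq F r = 2 * M2sq (fun z => ((F z).re : ℂ)) r - (F 0 ^ 2).re := by
  simp only [M2sq_eq_circleAverage, Complex.norm_real, Real.norm_eq_abs, sq_abs]
  exact (hF.diffContOnCl_ball (closedBall_subset_ball hr)).circleAverage_sq_norm

/-- If `F` is analytic on the unit disk and `Re F` has bounded means, then `F ∈ H²`, with
`sup M₂(F,r)² ≤ 2 sup M₂(Re F, r)² + |Re (F 0 ^ 2)|`. -/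
theorem analytic_in_H2 (F : ℂ → ℂ) (hF : DifferentiableOn ℂ F (ball (0:ℂ) 1))
    (hUb : ∃ C : ℝ, ∀ r ∈ Ioo (0:ℝ) 1, M2sq (fun z => ((F z).re : ℂ)) r ≤ C) :
    (∃ C : ℝ, ∀ r ∈ Ioo (0:ℝ) 1, M2sq F r ≤ C) ∧
    sSup (M2sq F '' Ioo (0:ℝ) 1) ≤
      2 * sSup (M2sq (fun z => ((F z).re : ℂ)) '' Ioo (0:ℝ) 1) + |((F 0) ^ 2).re| := by
  obtain ⟨C, hC⟩ := hUb
  have hbdd : BddAbove (M2sq (fun z => ((F z).re : ℂ)) '' Ioo (0:ℝ) 1) :=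
    ⟨C, forall_mem_image.2 hC⟩
  have hbound : ∀ r ∈ Ioo (0:ℝ) 1,
      M2sq F r ≤ 2 * sSup (M2sq (fun z => ((F z).re : ℂ)) '' Ioo (0:ℝ) 1) + |((F 0) ^ 2).re| := by
    intro r hr
    rw [M2sq_eq_two_mul_M2sq_re_sub hF (abs_lt.2 ⟨by linarith [hr.1], hr.2⟩)]
    linarith [le_csSup hbdd (mem_image_of_mem _ hr), neg_abs_le ((F 0 ^ 2).re)]
  exact ⟨⟨_, hbound⟩, csSup_le ((nonempty_Ioo.2 one_pos).image _) (forall_mem_image.2 hbound)⟩
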